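/- Under hypotheses H(A), H(J), H(γ,f) and (H_s), there exists a constant c > 0, independent of the choice of subspace, such that for every finite-dimensional subspace V^h ⊆ V the unique solution u^h ∈ V^h of the discrete problem P_opt^h satisfies ‖u^h‖_V ≤ c(1 + ‖f‖_{V*}), and consequently ‖γu^h‖_X ≤ c_γ c(1 + ‖f‖_{V*}). -/

import Mathlib

open Filter Topology

/-- Clarke generalized directional derivative of `j` at `x` in direction `v`. -/
noncomputable def clarkeDeriv {Y : Type*} [NormedAddCommGroup Y] [NormedSpace ℝ Y]
    (j : Y → ℝ) (x v : Y) : ℝ :=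
  Filter.limsup (fun p : Y × ℝ => (j (p.1 + p.2 • v) - j p.1) / p.2)
    ((nhds x) ×ˢ (nhdsWithin (0 : ℝ) (Set.Ioi (0 : ℝ))))

/-- Clarke generalized subdifferential of `j` at `x`. -/
noncomputable def clarkeSubdiff {Y : Type*} [NormedAddCommGroup Y] [NormedSpace ℝ Y]
    (j : Y → ℝ) (x : Y) : Set (Y →L[ℝ] ℝ) :=
  {ξ : Y →L[ℝ] ℝ | ∀ v : Y, ξ v ≤ clarkeDeriv j x v}

/-!
Test the stationarity condition in the direction `-uₕ`. The smooth part `F_A - f` has continuous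
Gâteaux derivative `A - f`, so it is strictly differentiable and contributes exactly
`-⟨A uₕ, uₕ⟩ + ⟨f, uₕ⟩`, while the Clarke derivative of `v ↦ J(γuₕ, γv)` is bounded by that of `J`
at `γuₕ` in direction `-γuₕ`. Relaxed monotonicity of `J` against the point `(0, 0)`, together with
a Clarke subgradient of `J(0, ·)` at `0` (it exists by Hahn–Banach, `J⁰` being sublinear) of norm
at most `c₀`, bounds the latter by `(m_α + m_L)‖γuₕ‖² + c₀‖γuₕ‖`. Strong monotonicity of `A` then
gives `(m_A - (m_α + m_L)c_γ²)‖uₕ‖² ≤ (‖A 0‖ + c₀c_γ + ‖f‖)‖uₕ‖`, a bound in which `Vₕ` does not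
appear.
-/

section ClarkeFilter

variable {Y : Type*} [TopologicalSpace Y]

def clarkeFilter (x : Y) : Filter (Y × ℝ) := 𝓝 x ×ˢ 𝓝[>] 0

instance (x : Y) : (clarkeFilter x).NeBot := by
  unfold clarkeFilter; infer_instance

lemma eventually_clarkeFilter_pos (x : Y) : ∀ᶠ p in clarkeFilter x, 0 < p.2 :=
  tendsto_snd.eventually self_mem_nhdsWithin

lemma tendsto_snd_clarkeFilter (x : Y) : Tendsto Prod.snd (clarkeFilter x) (𝓝 0) :=
  tendsto_snd.mono_right nhdsWithin_le_nhds

lemma tendsto_scale_clarkeFilter (x : Y) {c : ℝ} (hc : 0 < c) :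
    Tendsto (fun p : Y × ℝ => (p.1, c * p.2)) (clarkeFilter x) (clarkeFilter x) :=
  tendsto_fst.prodMk ((tendsto_iff_comap.mpr (comap_mulLeft_nhdsGT_zero hc).ge).comp tendsto_snd)

end ClarkeFilter

section Clarke

variable {Y Z : Type*} [NormedAddCommGroup Y] [NormedSpace ℝ Y]
  [NormedAddCommGroup Z] [NormedSpace ℝ Z]

noncomputable def clarkeQuotient (j : Y → ℝ) (v : Y) (p : Y × ℝ) : ℝ :=
  (j (p.1 + p.2 • v) - j p.1) / p.2

lemma clarkeDeriv_eq_limsup (j : Y → ℝ) (x v : Y) :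
    clarkeDeriv j x v = limsup (clarkeQuotient j v) (clarkeFilter x) := rfl

lemma tendsto_add_smul_clarkeFilter (x u : Y) :
    Tendsto (fun p : Y × ℝ => p.1 + p.2 • u) (clarkeFilter x) (𝓝 x) := by
  have h := (tendsto_fst (g := 𝓝[>] (0 : ℝ))).add ((tendsto_snd_clarkeFilter x).smul_const u)
  rwa [zero_smul, add_zero] at h

lemma tendsto_shift_clarkeFilter (x u : Y) :
    Tendsto (fun p : Y × ℝ => (p.1 + p.2 • u, p.2)) (clarkeFilter x) (clarkeFilter x) :=
  (tendsto_add_smul_clarkeFilter x u).prodMk tendsto_snd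

lemma ContinuousLinearMap.tendsto_prodMap_clarkeFilter (T : Y →L[ℝ] Z) (x : Y) :
    Tendsto (Prod.map T id) (clarkeFilter x) (clarkeFilter (T x)) :=
  ((T.continuous.tendsto x).comp tendsto_fst).prodMk tendsto_snd

namespace LocallyLipschitz

variable {j : Y → ℝ}

lemma exists_eventually_abs_clarkeQuotient_le (hj : LocallyLipschitz j) (x : Y) :
    ∃ K : ℝ, ∀ v, ∀ᶠ p in clarkeFilter x, |clarkeQuotient j v p| ≤ K * ‖v‖ := by
  obtain ⟨K, t, ht, hK⟩ := hj x
  refine ⟨K, fun v => ?_⟩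
  filter_upwards [tendsto_fst.eventually ht, (tendsto_add_smul_clarkeFilter x v).eventually ht,
    eventually_clarkeFilter_pos x] with p hp₁ hp₂ hp
  rw [clarkeQuotient, abs_div, abs_of_pos hp, div_le_iff₀ hp]
  calc |j (p.1 + p.2 • v) - j p.1| ≤ K * ‖p.1 + p.2 • v - p.1‖ := by
        simpa [Real.dist_eq, dist_eq_norm] using hK.dist_le_mul _ hp₂ _ hp₁
    _ = K * ‖v‖ * p.2 := by
        rw [add_sub_cancel_left, norm_smul, Real.norm_of_nonneg hp.le]; ring

lemma isBoundedUnder_abs_clarkeQuotient_comp (hj : LocallyLipschitz j) {α : Type*}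
    {F : Filter α} {m : α → Y × ℝ} {x : Y} (hm : Tendsto m F (clarkeFilter x)) (v : Y) :
    IsBoundedUnder (· ≤ ·) F (fun a => |(clarkeQuotient j v ∘ m) a|) := by
  obtain ⟨K, hK⟩ := hj.exists_eventually_abs_clarkeQuotient_le x
  exact isBoundedUnder_of_eventually_le (hm.eventually (hK v))

lemma limsup_clarkeQuotient_comp_le (hj : LocallyLipschitz j) {α : Type*}
    {F : Filter α} [F.NeBot] {m : α → Y × ℝ} {x : Y} (hm : Tendsto m F (clarkeFilter x))
    (v : Y) : limsup (clarkeQuotient j v ∘ m) F ≤ clarkeDeriv j x v :=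
  hm.limsup_comp_le_limsup
    (isBoundedUnder_le_abs.mp
      (hj.isBoundedUnder_abs_clarkeQuotient_comp (tendsto_id.mono_left hm) v)).2.isCoboundedUnder_le
    (isBoundedUnder_le_abs.mp (hj.isBoundedUnder_abs_clarkeQuotient_comp tendsto_id v)).1

lemma clarkeDeriv_add_le (hj : LocallyLipschitz j) (x u v : Y) :
    clarkeDeriv j x (u + v) ≤ clarkeDeriv j x u + clarkeDeriv j x v := by
  have hshift := tendsto_shift_clarkeFilter x u
  have hsplit : clarkeQuotient j (u + v)
      = clarkeQuotient j u + clarkeQuotient j v ∘ fun p => (p.1 + p.2 • u, p.2) := by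
    funext p
    simp only [clarkeQuotient, Pi.add_apply, Function.comp_apply, smul_add, ← add_assoc]
    ring
  obtain ⟨hu_le, hu_ge⟩ :=
    isBoundedUnder_le_abs.mp (hj.isBoundedUnder_abs_clarkeQuotient_comp tendsto_id u)
  obtain ⟨hv_le, hv_ge⟩ :=
    isBoundedUnder_le_abs.mp (hj.isBoundedUnder_abs_clarkeQuotient_comp hshift v)
  rw [clarkeDeriv_eq_limsup, hsplit]
  exact (limsup_add_le hu_ge hu_le hv_ge.isCoboundedUnder_le hv_le).trans
    (add_le_add le_rfl (hj.limsup_clarkeQuotient_comp_le hshift v))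

lemma clarkeDeriv_smul_le (hj : LocallyLipschitz j) (x v : Y) {c : ℝ} (hc : 0 < c) :
    clarkeDeriv j x (c • v) ≤ c * clarkeDeriv j x v := by
  have hscale := tendsto_scale_clarkeFilter x hc
  have hsplit : clarkeQuotient j (c • v)
      = (c * ·) ∘ clarkeQuotient j v ∘ fun p => (p.1, c * p.2) := by
    funext p
    simp only [clarkeQuotient, Function.comp_apply, smul_smul]
    rw [← mul_div_assoc, mul_div_mul_left _ _ hc.ne', mul_comm]
  obtain ⟨hle, hge⟩ :=
    isBoundedUnder_le_abs.mp (hj.isBoundedUnder_abs_clarkeQuotient_comp hscale v)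
  rw [clarkeDeriv_eq_limsup, hsplit,
    ← (monotone_mul_left_of_nonneg hc.le).map_limsup_of_continuousAt _
      (continuous_const_mul c).continuousAt hle hge.isCoboundedUnder_le]
  exact mul_le_mul_of_nonneg_left (hj.limsup_clarkeQuotient_comp_le hscale v) hc.le

lemma clarkeDeriv_smul (hj : LocallyLipschitz j) (x v : Y) {c : ℝ} (hc : 0 < c) :
    clarkeDeriv j x (c • v) = c * clarkeDeriv j x v := by
  refine (hj.clarkeDeriv_smul_le x v hc).antisymm ?_
  have h := hj.clarkeDeriv_smul_le x (c • v) (inv_pos.mpr hc)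
  rwa [inv_smul_smul₀ hc.ne', le_inv_mul_iff₀ hc] at h

lemma exists_clarkeDeriv_le_mul_norm (hj : LocallyLipschitz j) (x : Y) :
    ∃ K : ℝ, ∀ v, clarkeDeriv j x v ≤ K * ‖v‖ := by
  obtain ⟨K, hK⟩ := hj.exists_eventually_abs_clarkeQuotient_le x
  refine ⟨K, fun v => limsup_le_of_le ?_ ((hK v).mono fun p hp => (abs_le.mp hp).2)⟩
  exact (isBoundedUnder_le_abs.mp
    (hj.isBoundedUnder_abs_clarkeQuotient_comp tendsto_id v)).2.isCoboundedUnder_le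

lemma clarkeSubdiff_nonempty (hj : LocallyLipschitz j) (x : Y) :
    (clarkeSubdiff j x).Nonempty := by
  obtain ⟨K, hK⟩ := hj.exists_clarkeDeriv_le_mul_norm x
  have hzero : clarkeDeriv j x 0 = 0 := by
    have : clarkeQuotient j 0 = fun _ => 0 := by
      funext p
      simp [clarkeQuotient]
    rw [clarkeDeriv_eq_limsup, this, limsup_const]
  obtain ⟨g, -, hg⟩ := exists_extension_of_le_sublinear ⟨⊥, 0⟩ (clarkeDeriv j x)
    (fun c hc v => hj.clarkeDeriv_smul x v hc) (hj.clarkeDeriv_add_le x)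
    (fun v => by simp [(Submodule.mem_bot ℝ).mp v.2, hzero])
  have hg_bound (v : Y) : ‖g v‖ ≤ K * ‖v‖ := by
    refine abs_le.mpr ⟨?_, (hg v).trans (hK v)⟩
    have h₁ := hg (-v)
    have h₂ := hK (-v)
    rw [map_neg] at h₁
    rw [norm_neg] at h₂
    linarith
  exact ⟨g.mkContinuous K hg_bound, hg⟩

lemma neg_mul_norm_le_clarkeDeriv (hj : LocallyLipschitz j) {x : Y} {c : ℝ}
    (hc : ∀ ξ ∈ clarkeSubdiff j x, ‖ξ‖ ≤ c) (v : Y) : -(c * ‖v‖) ≤ clarkeDeriv j x v := by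
  obtain ⟨ξ, hξ⟩ := hj.clarkeSubdiff_nonempty x
  calc -(c * ‖v‖) ≤ -(‖ξ‖ * ‖v‖) :=
        neg_le_neg (mul_le_mul_of_nonneg_right (hc ξ hξ) (norm_nonneg v))
    _ ≤ ξ v := neg_le_of_abs_le (ξ.le_opNorm v)
    _ ≤ clarkeDeriv j x v := hξ v

end LocallyLipschitz

lemma clarkeDeriv_add_comp_le {Φ : Y → ℝ} {x v : Y} {a : ℝ}
    (hΦ : Tendsto (clarkeQuotient Φ v) (clarkeFilter x) (𝓝 a)) {j : Z → ℝ}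
    (hj : LocallyLipschitz j) (T : Y →L[ℝ] Z) :
    clarkeDeriv (fun y => Φ y + j (T y)) x v ≤ a + clarkeDeriv j (T x) (T v) := by
  have hT := T.tendsto_prodMap_clarkeFilter x
  have hsplit : clarkeQuotient (fun y => Φ y + j (T y)) v
      = clarkeQuotient Φ v + clarkeQuotient j (T v) ∘ Prod.map T id := by
    funext p
    simp only [clarkeQuotient, Pi.add_apply, Function.comp_apply, Prod.map_fst, Prod.map_snd,
      id, map_add, map_smul]
    ring
  obtain ⟨hle, hge⟩ :=
    isBoundedUnder_le_abs.mp (hj.isBoundedUnder_abs_clarkeQuotient_comp hT (T v))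
  rw [clarkeDeriv_eq_limsup, hsplit, ← hΦ.limsup_eq]
  exact (limsup_add_le hΦ.isBoundedUnder_ge hΦ.isBoundedUnder_le hge.isCoboundedUnder_le hle).trans
    (add_le_add le_rfl (hj.limsup_clarkeQuotient_comp_le hT _))

lemma hasDerivAt_of_forall_hasLineDerivAt {Φ b : Y → ℝ} {y v : Y}
    (hΦ : ∀ z, HasLineDerivAt ℝ Φ (b z) z v) (s : ℝ) :
    HasDerivAt (fun s : ℝ => Φ (y + s • v)) (b (y + s • v)) s := by
  have h := HasDerivAt.comp_sub_const s s (by rw [sub_self]; exact hΦ (y + s • v))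
  have hline : (fun r => Φ (y + s • v + (r - s) • v)) = fun r => Φ (y + r • v) := by
    funext r
    rw [sub_smul, add_add_sub_cancel]
  rwa [hline] at h

lemma tendsto_clarkeQuotient_of_hasLineDerivAt {Φ b : Y → ℝ} {x v : Y}
    (hΦ : ∀ y, HasLineDerivAt ℝ Φ (b y) y v) (hb : ContinuousAt b x) :
    Tendsto (clarkeQuotient Φ v) (clarkeFilter x) (𝓝 (b x)) := by
  rw [Metric.tendsto_nhds]
  intro ε hε
  obtain ⟨δ, hδ, hbδ⟩ := Metric.continuousAt_iff.mp hb (ε / 2) (half_pos hε)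
  have hnear : ∀ᶠ p in clarkeFilter x, dist p.1 x + p.2 * ‖v‖ < δ := by
    have h := ((tendsto_fst (g := 𝓝[>] (0 : ℝ))).dist (tendsto_const_nhds (x := x))).add
      ((tendsto_snd_clarkeFilter x).mul_const ‖v‖)
    rw [dist_self, zero_mul, add_zero] at h
    exact h.eventually_lt_const hδ
  filter_upwards [hnear, eventually_clarkeFilter_pos x] with p hp hp₀
  have hbound : ∀ s ∈ Set.Ico 0 p.2, ‖b (p.1 + s • v) - b x‖ ≤ ε / 2 := by
    intro s hs
    refine (hbδ ?_).le
    calc dist (p.1 + s • v) x ≤ dist (p.1 + s • v) p.1 + dist p.1 x := dist_triangle _ _ _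
      _ = s * ‖v‖ + dist p.1 x := by rw [dist_self_add_left, norm_smul, Real.norm_of_nonneg hs.1]
      _ ≤ dist p.1 x + p.2 * ‖v‖ := by nlinarith [hs.2, norm_nonneg v]
      _ < δ := hp
  -- mean value inequality for `s ↦ Φ (p.1 + s • v) - s * b x` on `[0, p.2]`
  have hmvt := norm_image_sub_le_of_norm_deriv_le_segment'
    (fun s _ => ((hasDerivAt_of_forall_hasLineDerivAt hΦ s).sub
      (hasDerivAt_mul_const (b x))).hasDerivWithinAt) hbound p.2 ⟨hp₀.le, le_rfl⟩
  have hquot : clarkeQuotient Φ v p - b x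
      = (Φ (p.1 + p.2 • v) - p.2 * b x - Φ p.1) / p.2 := by
    rw [clarkeQuotient]
    field_simp
    ring
  rw [Real.dist_eq, hquot, abs_div, abs_of_pos hp₀, div_lt_iff₀ hp₀]
  simp only [Pi.sub_apply, zero_smul, add_zero, zero_mul, sub_zero, Real.norm_eq_abs] at hmvt
  linarith [mul_lt_mul_of_pos_right (half_lt_self hε) hp₀]

end Clarke

lemma mul_norm_sq_sub_le_apply_self {V : Type*} [NormedAddCommGroup V] [NormedSpace ℝ V]
    {A : V → V →L[ℝ] ℝ} {m : ℝ} (hA : ∀ u v, m * ‖u - v‖ ^ 2 ≤ (A u - A v) (u - v)) (u : V) :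
    m * ‖u‖ ^ 2 - ‖A 0‖ * ‖u‖ ≤ A u u := by
  have h := hA u 0
  simp only [sub_zero, sub_apply] at h
  linarith [neg_le_of_abs_le ((A 0).le_opNorm u)]

lemma clarkeDeriv_self_neg_le {X : Type*} [NormedAddCommGroup X] [NormedSpace ℝ X]
    {J : X → X → ℝ} (hJ : LocallyLipschitz (J 0)) {c₀ m_α m_L : ℝ}
    (hbdd : ∀ ξ ∈ clarkeSubdiff (J 0) 0, ‖ξ‖ ≤ c₀)
    (hmono : ∀ w₁ w₂ v₁ v₂ : X, clarkeDeriv (J w₁) v₁ (v₂ - v₁) + clarkeDeriv (J w₂) v₂ (v₁ - v₂)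
      ≤ m_α * ‖v₁ - v₂‖ ^ 2 + m_L * ‖w₁ - w₂‖ * ‖v₁ - v₂‖) (w : X) :
    clarkeDeriv (J w) w (-w) ≤ (m_α + m_L) * ‖w‖ ^ 2 + c₀ * ‖w‖ := by
  have h := hmono w 0 w 0
  simp only [zero_sub, sub_zero] at h
  have hw : m_L * ‖w‖ * ‖w‖ = m_L * ‖w‖ ^ 2 := by ring
  linarith [hJ.neg_mul_norm_le_clarkeDeriv hbdd w]

lemma le_div_of_mul_sq_le_mul {δ M x : ℝ} (hδ : 0 < δ) (hM : 0 ≤ M) (hx : 0 ≤ x)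
    (h : δ * x ^ 2 ≤ M * x) : x ≤ M / δ := by
  rw [le_div_iff₀ hδ]
  rcases hx.eq_or_lt with rfl | hx
  · simpa using hM
  · nlinarith

theorem stmt12_general
    {V : Type*} [NormedAddCommGroup V] [NormedSpace ℝ V]
    {X : Type*} [NormedAddCommGroup X] [NormedSpace ℝ X]
    (A : V → V →L[ℝ] ℝ) (F_A : V → ℝ) (L_A : ℝ)
    (hA_lip : ∀ u v : V, ‖A u - A v‖ ≤ L_A * ‖u - v‖)
    (hA_pot : ∀ u v : V, HasLineDerivAt ℝ F_A (A u v) u v)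
    (m_A : ℝ)
    (hA_mono : ∀ u v : V, m_A * ‖u - v‖ ^ 2 ≤ (A u - A v) (u - v))
    (J : X → X → ℝ)
    (hJ_lip : ∀ w : X, LocallyLipschitz (J w))
    (c₀ c₁ c₂ : ℝ) (hc₀ : 0 ≤ c₀)
    (hJ_bdd : ∀ w v : X, ∀ ξ ∈ clarkeSubdiff (J w) v, ‖ξ‖ ≤ c₀ + c₁ * ‖v‖ + c₂ * ‖w‖)
    (m_α m_L : ℝ) (hm_α : 0 ≤ m_α) (hm_L : 0 ≤ m_L)
    (hJ_mono : ∀ w₁ w₂ v₁ v₂ : X,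
      clarkeDeriv (J w₁) v₁ (v₂ - v₁) + clarkeDeriv (J w₂) v₂ (v₁ - v₂)
        ≤ m_α * ‖v₁ - v₂‖ ^ 2 + m_L * ‖w₁ - w₂‖ * ‖v₁ - v₂‖)
    (γ : V →L[ℝ] X) (f : V →L[ℝ] ℝ)
    (hs : (m_α + m_L) * ‖γ‖ ^ 2 < m_A)
 :
    ∃ c : ℝ, 0 < c ∧ ∀ (Vh : Submodule ℝ V), FiniteDimensional ℝ Vh →
      ∀ uh : Vh,
        ((0 : Vh →L[ℝ] ℝ) ∈
          clarkeSubdiff (fun v : Vh => F_A ↑v - f ↑v + J (γ ↑uh) (γ ↑v)) uh) →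
        ‖(uh : V)‖ ≤ c * (1 + ‖f‖) ∧ ‖γ (uh : V)‖ ≤ ‖γ‖ * (c * (1 + ‖f‖)) := by
  set δ := m_A - (m_α + m_L) * ‖γ‖ ^ 2
  set M := ‖A 0‖ + c₀ * ‖γ‖ + ‖f‖
  have hδ : 0 < δ := sub_pos.mpr hs
  have hM : 0 ≤ M := by positivity
  have hA_cont : Continuous A :=
    (LipschitzWith.of_dist_le' fun u v => by simpa [dist_eq_norm] using hA_lip u v).continuous
  refine ⟨M / δ + 1, by positivity, fun Vh _ uh h0 => ?_⟩
  set u : V := ↑uh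
  set w : X := γ u
  have hquot : Tendsto (clarkeQuotient (fun v : Vh => F_A v - f v) (-uh)) (clarkeFilter uh)
      (𝓝 (A u (-u) - f (-u))) :=
    tendsto_clarkeQuotient_of_hasLineDerivAt (b := fun y : Vh => A y (-u) - f (-u))
      (fun y => (hA_pot y (-u)).sub (f.hasFDerivAt.hasLineDerivAt (-u))) (by fun_prop)
  have hstat : 0 ≤ -A u u + f u + clarkeDeriv (J w) w (-w) := by
    simpa using (h0 (-uh)).trans (clarkeDeriv_add_comp_le hquot (hJ_lip w) (γ ∘L Vh.subtypeL))
  have hJ := clarkeDeriv_self_neg_le (hJ_lip 0) (fun ξ hξ => by simpa using hJ_bdd 0 0 ξ hξ)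
    hJ_mono w
  have hw : ‖w‖ ≤ ‖γ‖ * ‖u‖ := γ.le_opNorm u
  have hw2 : ‖w‖ ^ 2 ≤ ‖γ‖ ^ 2 * ‖u‖ ^ 2 := by
    rw [← mul_pow]; exact pow_le_pow_left₀ (norm_nonneg w) hw 2
  have hu : ‖u‖ ≤ M / δ := le_div_of_mul_sq_le_mul hδ hM (norm_nonneg u) <| by
    linarith [mul_norm_sq_sub_le_apply_self hA_mono u, le_of_abs_le (f.le_opNorm u),
      mul_le_mul_of_nonneg_left hw2 (add_nonneg hm_α hm_L), mul_le_mul_of_nonneg_left hw hc₀]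
  have hbound : ‖u‖ ≤ (M / δ + 1) * (1 + ‖f‖) := by
    nlinarith [norm_nonneg f, div_nonneg hM hδ.le]
  exact ⟨hbound, hw.trans (mul_le_mul_of_nonneg_left hbound (norm_nonneg γ))⟩

theorem stmt12
    {V : Type*} [NormedAddCommGroup V] [NormedSpace ℝ V] [CompleteSpace V]
    {X : Type*} [NormedAddCommGroup X] [NormedSpace ℝ X] [CompleteSpace X]
    (hV_refl : Function.Surjective (NormedSpace.inclusionInDoubleDual ℝ V))
    (A : V → V →L[ℝ] ℝ) (F_A : V → ℝ) (L_A : ℝ) (hL_A : 0 < L_A)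
    (hA_lip : ∀ u v : V, ‖A u - A v‖ ≤ L_A * ‖u - v‖)
    (hA_pot : ∀ u v : V, HasLineDerivAt ℝ F_A (A u v) u v)
    (m_A : ℝ) (hm_A : 0 < m_A)
    (hA_mono : ∀ u v : V, m_A * ‖u - v‖ ^ 2 ≤ (A u - A v) (u - v))
    (J : X → X → ℝ)
    (hJ_lip : ∀ w : X, LocallyLipschitz (J w))
    (c₀ c₁ c₂ : ℝ) (hc₀ : 0 ≤ c₀) (hc₁ : 0 ≤ c₁) (hc₂ : 0 ≤ c₂)
    (hJ_bdd : ∀ w v : X, ∀ ξ ∈ clarkeSubdiff (J w) v, ‖ξ‖ ≤ c₀ + c₁ * ‖v‖ + c₂ * ‖w‖)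
    (m_α m_L : ℝ) (hm_α : 0 ≤ m_α) (hm_L : 0 ≤ m_L)
    (hJ_mono : ∀ w₁ w₂ v₁ v₂ : X,
      clarkeDeriv (J w₁) v₁ (v₂ - v₁) + clarkeDeriv (J w₂) v₂ (v₁ - v₂)
        ≤ m_α * ‖v₁ - v₂‖ ^ 2 + m_L * ‖w₁ - w₂‖ * ‖v₁ - v₂‖)
    (γ : V →L[ℝ] X) (f : V →L[ℝ] ℝ)
    (hs : (m_α + m_L) * ‖γ‖ ^ 2 < m_A)
 :
    ∃ c : ℝ, 0 < c ∧ ∀ (Vh : Submodule ℝ V), FiniteDimensional ℝ Vh →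
      ∀ uh : Vh,
        ((0 : Vh →L[ℝ] ℝ) ∈
          clarkeSubdiff (fun v : Vh => F_A ↑v - f ↑v + J (γ ↑uh) (γ ↑v)) uh) →
        ‖(uh : V)‖ ≤ c * (1 + ‖f‖) ∧ ‖γ (uh : V)‖ ≤ ‖γ‖ * (c * (1 + ‖f‖)) :=
  stmt12_general A F_A L_A hA_lip hA_pot m_A hA_mono J hJ_lip c₀ c₁ c₂ hc₀ hJ_bdd m_α m_L hm_α hm_L
    hJ_mono γ f hs
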